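/- Define u_0(n) = ln W(n) − 1/2 + (1/2)ln π − (n+1/3)·ln(1 − 1/(2(n+1/3))) + (1/2)ln n, where W(n) = (2n−1)!!/(2n)!!. Then lim_{n→∞} n^4 (u_0(n) − u_0(n+1)) = 1/48. -/

import Mathlib

open Real Filter Topology

/-- The Wallis ratio W(n) = (2n-1)!!/(2n)!!. -/
noncomputable def W (n : ℕ) : ℝ :=
  (∏ k ∈ Finset.range n, (2 * (k : ℝ) + 1)) / (∏ k ∈ Finset.range n, (2 * (k : ℝ) + 2))

noncomputable def u0 (n : ℕ) : ℝ :=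
  Real.log (W n) - 1 / 2 + (1 / 2) * Real.log π -
    ((n : ℝ) + 1 / 3) * Real.log (1 - 1 / (2 * ((n : ℝ) + 1 / 3))) +
    (1 / 2) * Real.log n

/-!
Since `W (n + 1) = W n * (1 - 1 / (2n + 2))`, the difference `u0 n - u0 (n + 1)` is a fixed
combination of four terms `log (1 - 1 / z)` with `z` affine in `n`. Replacing each logarithm by
its Taylor polynomial of degree 5 costs `O(n⁻⁶)` per term, hence `O(n⁻⁵)` in total, and turns
`n ^ 4 * (u0 n - u0 (n + 1))` into a rational function of `1 / n` whose value at `0` is `1 / 48`.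
-/

noncomputable def logTaylor (n : ℕ) (y : ℝ) : ℝ := ∑ i ∈ Finset.range n, y ^ (i + 1) / (i + 1)

lemma abs_log_one_sub_add_logTaylor_le {y : ℝ} (hy : |y| ≤ 1 / 2) (n : ℕ) :
    |Real.log (1 - y) + logTaylor n y| ≤ 2 * |y| ^ (n + 1) := by
  have h := Real.abs_log_sub_add_sum_range_le (hy.trans_lt (by norm_num)) n
  rw [add_comm] at h
  refine h.trans ?_
  rw [div_le_iff₀ (by linarith)]
  nlinarith [pow_nonneg (abs_nonneg y) (n + 1)]

lemma abs_log_one_sub_inv_add_logTaylor_le {z : ℝ} (hz : 2 ≤ z) (n : ℕ) :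
    |Real.log (1 - 1 / z) + logTaylor n (1 / z)| ≤ 2 / z ^ (n + 1) := by
  have hy : |1 / z| ≤ 1 / 2 := by
    rw [abs_of_pos (by positivity)]
    exact one_div_le_one_div_of_le (by norm_num) hz
  have h := abs_log_one_sub_add_logTaylor_le hy n
  rwa [abs_of_pos (by positivity : 0 < 1 / z), div_pow, one_pow, ← div_eq_mul_one_div] at h

noncomputable def wallisCombination (g : ℝ → ℝ) (x : ℝ) : ℝ :=
  -g (2 * x + 2) - (x + 1 / 3) * g (2 * x + 2 / 3) + (x + 4 / 3) * g (2 * x + 8 / 3)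
    + 1 / 2 * g (x + 1)

lemma wallisCombination_add (g h : ℝ → ℝ) (x : ℝ) :
    wallisCombination g x + wallisCombination h x = wallisCombination (g + h) x := by
  simp only [wallisCombination, Pi.add_apply]
  ring

lemma abs_wallisCombination_le {g : ℝ → ℝ} {x B : ℝ} (hx : 1 / 3 ≤ x)
    (hg : ∀ z, x + 1 ≤ z → |g z| ≤ B) :
    |wallisCombination g x| ≤ (2 * x + 19 / 6) * B := by
  have h1 := abs_le.mp (hg (2 * x + 2) (by linarith))
  have h2 := abs_le.mp (hg (2 * x + 2 / 3) (by linarith))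
  have h3 := abs_le.mp (hg (2 * x + 8 / 3) (by linarith))
  have h4 := abs_le.mp (hg (x + 1) le_rfl)
  have hx2 : 0 ≤ x + 1 / 3 := by linarith
  have hx3 : 0 ≤ x + 4 / 3 := by linarith
  rw [abs_le, wallisCombination]
  constructor <;> nlinarith

lemma W_pos (n : ℕ) : 0 < W n := by
  unfold W
  apply div_pos <;> exact Finset.prod_pos fun i _ => by positivity

lemma W_succ (n : ℕ) : W (n + 1) = W n * (1 - 1 / (2 * (n : ℝ) + 2)) := by
  have h : (2 * (n : ℝ) + 1) / (2 * n + 2) = 1 - 1 / (2 * n + 2) := by field_simp; ring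
  rw [W, W, Finset.prod_range_succ, Finset.prod_range_succ, ← h, div_mul_div_comm]

lemma u0_sub_u0_succ {n : ℕ} (hn : 1 ≤ n) :
    u0 n - u0 (n + 1) = wallisCombination (fun z => Real.log (1 - 1 / z)) n := by
  have hx : (1 : ℝ) ≤ n := by exact_mod_cast hn
  have hlogW : Real.log (W (n + 1)) = Real.log (W n) + Real.log (1 - 1 / (2 * (n : ℝ) + 2)) := by
    rw [W_succ, Real.log_mul (W_pos n).ne']
    exact (sub_pos.mpr (by rw [div_lt_one (by linarith)]; linarith)).ne'
  have hlogn : Real.log (n : ℝ) - Real.log ((n : ℝ) + 1) = Real.log (1 - 1 / ((n : ℝ) + 1)) := by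
    rw [← Real.log_div (by linarith) (by linarith)]
    congr 1
    field_simp
    ring
  simp only [u0, wallisCombination]
  push_cast
  rw [hlogW, show (n : ℝ) + 1 + 1 / 3 = n + 4 / 3 by ring,
    show 2 * ((n : ℝ) + 4 / 3) = 2 * n + 8 / 3 by ring,
    show 2 * ((n : ℝ) + 1 / 3) = 2 * n + 2 / 3 by ring]
  linarith

lemma logTaylor_five (y : ℝ) :
    logTaylor 5 y = y + y ^ 2 / 2 + y ^ 3 / 3 + y ^ 4 / 4 + y ^ 5 / 5 := by
  norm_num [logTaylor, Finset.sum_range_succ]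

/-- Numerator of `x ^ 4 * wallisCombination (fun z => -logTaylor 5 (1 / z)) x` written in
`t = 1 / x`; its constant term `2048 / 3 = 32 ^ 3 / 48` gives the limit `1 / 48`. -/
noncomputable def wallisTaylorNum (t : ℝ) : ℝ :=
  2048/3 + (1503232/135)*t + (7052288/81)*t^2 + (3870208/9)*t^3 + (1085840896/729)*t^4
  + (41638312448/10935)*t^5 + (80765325824/10935)*t^6 + (217214074880/19683)*t^7
  + (755329627136/59049)*t^8 + (226598392832/19683)*t^9 + (2363393554432/295245)*t^10
  + (1254948529664/295245)*t^11 + (33240121856/19683)*t^12 + (28655062528/59049)*t^13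
  + (5617671680/59049)*t^14 + (124361728/10935)*t^15 + (36884480/59049)*t^16

noncomputable def wallisTaylor (t : ℝ) : ℝ :=
  wallisTaylorNum t / ((2 + 2 * t) * (2 + 2 / 3 * t) * (2 + 8 / 3 * t) * (1 + t)) ^ 5

lemma pow_four_mul_wallisCombination_logTaylor {x : ℝ} (hx : 0 < x) :
    x ^ 4 * wallisCombination (fun z => -logTaylor 5 (1 / z)) x = wallisTaylor (1 / x) := by
  have h1 : 2 * x + 2 ≠ 0 := by linarith
  have h2 : 2 * x + 2 / 3 ≠ 0 := by linarith
  have h3 : 2 * x + 8 / 3 ≠ 0 := by linarith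
  have h4 : x + 1 ≠ 0 := by linarith
  simp only [wallisCombination, logTaylor_five, wallisTaylor, wallisTaylorNum]
  field_simp
  ring

lemma tendsto_wallisTaylor_one_div :
    Tendsto (fun n : ℕ => wallisTaylor (1 / (n : ℝ))) atTop (𝓝 (1 / 48)) := by
  have hcont : ContinuousAt wallisTaylor 0 := by
    unfold wallisTaylor wallisTaylorNum
    exact ContinuousAt.div (by fun_prop) (by fun_prop) (by norm_num)
  have h0 : wallisTaylor 0 = 1 / 48 := by norm_num [wallisTaylor, wallisTaylorNum]
  rw [← h0]
  exact hcont.tendsto.comp tendsto_one_div_atTop_nhds_zero_nat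

lemma pow_four_mul_abs_wallisCombination_logRemainder_le {x : ℝ} (hx : 1 ≤ x) :
    x ^ 4 * |wallisCombination (fun z => Real.log (1 - 1 / z) + logTaylor 5 (1 / z)) x|
      ≤ 8 / x := by
  have hB := abs_wallisCombination_le (x := x) (B := 2 / (x + 1) ^ 6) (by linarith) fun z hz =>
    (abs_log_one_sub_inv_add_logTaylor_le (by linarith) 5).trans
      (div_le_div_of_nonneg_left (by norm_num) (by positivity) (by gcongr))
  calc x ^ 4 * |wallisCombination _ x| ≤ (x + 1) ^ 4 * ((4 * (x + 1)) * (2 / (x + 1) ^ 6)) := by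
        gcongr
        · linarith
        · exact hB.trans (by gcongr; linarith)
    _ = 8 / (x + 1) := by field_simp; ring
    _ ≤ 8 / x := by gcongr; linarith

theorem u0_diff_limit :
    Tendsto (fun n : ℕ => (n : ℝ) ^ 4 * (u0 n - u0 (n + 1))) atTop (nhds (1 / 48)) := by
  have hrem : Tendsto (fun n : ℕ => (n : ℝ) ^ 4 *
      wallisCombination (fun z => Real.log (1 - 1 / z) + logTaylor 5 (1 / z)) n) atTop (𝓝 0) := by
    refine squeeze_zero_norm' ?_ (tendsto_const_div_atTop_nhds_zero_nat 8)
    filter_upwards [eventually_ge_atTop 1] with n hn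
    rw [norm_mul, norm_pow, Real.norm_natCast, Real.norm_eq_abs]
    exact pow_four_mul_abs_wallisCombination_logRemainder_le (by exact_mod_cast hn)
  have hsum := tendsto_wallisTaylor_one_div.add hrem
  rw [add_zero] at hsum
  refine hsum.congr' ?_
  filter_upwards [eventually_ge_atTop 1] with n hn
  have hx : (0 : ℝ) < n := by exact_mod_cast hn
  rw [u0_sub_u0_succ hn, ← pow_four_mul_wallisCombination_logTaylor hx, ← mul_add,
    wallisCombination_add]
  congr 2
  ext z
  simp only [Pi.add_apply]
  ring
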